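/- arXiv:2002.09643 — 5 statements merged into one kernel-verified Lean document; each statement's English description precedes it below -/
import Mathlib

section
/- Let X be a real p×n matrix and Y a real q×n matrix such that XX^T and YY^T are invertible, and let λ > 0 with λ ≠ 1. Then λ is an eigenvalue of the sample canonical correlation matrix C_XY := (XX^T)^{-1/2} (XY^T) (YY^T)^{-1} (YX^T) (XX^T)^{-1/2} if and only if det H(λ) = 0, where H(λ) is the (p+q+2n)×(p+q+2n) symmetric block matrix H(λ) = [[0, W],[W^T, D(λ)^{-1}]], with W = diag(X, Y) (the (p+q)×2n block-diagonal matrix with blocks X and Y) and D(λ) the 2n×2n matrix [[λ I_n, λ^{1/2} I_n],[λ^{1/2} I_n, λ I_n]]. -/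
/-!
Via Schur complements, `det H(λ) = det D(λ)⁻¹ · ± det (W D(λ) Wᵀ)`, and `W D(λ) Wᵀ` is the block
matrix `[[λ XXᵀ, √λ XYᵀ], [√λ YXᵀ, λ YYᵀ]]`. A second Schur complement, with respect to the
invertible block `λ YYᵀ`, reduces its vanishing to that of `det (λ XXᵀ - XYᵀ (YYᵀ)⁻¹ YXᵀ)`, since
`√λ · λ⁻¹ · √λ = 1`. Writing `XXᵀ = S S` with `S = (XXᵀ)^{1/2}`, this matrix is
`S (λ - C_XY) S`, so it is singular exactly when `λ` is an eigenvalue of `C_XY`.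
-/

open Matrix

namespace Matrix.PosSemidef

open scoped ComplexOrder

/-- The positive semidefinite square root of a positive semidefinite matrix
(the definition removed from Mathlib, restored with its old meaning). -/
noncomputable def sqrt {n 𝕜 : Type*} [Fintype n] [DecidableEq n] [RCLike 𝕜]
    {A : Matrix n n 𝕜} (hA : A.PosSemidef) : Matrix n n 𝕜 :=
  (hA.isHermitian.eigenvectorUnitary : Matrix n n 𝕜) *
    diagonal ((RCLike.ofReal : ℝ → 𝕜) ∘ (Real.sqrt ∘ hA.isHermitian.eigenvalues)) *
    (star hA.isHermitian.eigenvectorUnitary : Matrix n n 𝕜)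

theorem sqrt_mul_self {n 𝕜 : Type*} [Fintype n] [DecidableEq n] [RCLike 𝕜]
    {A : Matrix n n 𝕜} (hA : A.PosSemidef) : hA.sqrt * hA.sqrt = A := by
  have hUU : (star hA.isHermitian.eigenvectorUnitary : Matrix n n 𝕜) *
      (hA.isHermitian.eigenvectorUnitary : Matrix n n 𝕜) = 1 := Unitary.coe_star_mul_self _
  unfold sqrt
  conv_rhs => rw [hA.isHermitian.spectral_theorem, Unitary.conjStarAlgAut_apply]
  simp only [Matrix.mul_assoc]
  rw [← Matrix.mul_assoc (star _ : Matrix n n 𝕜) _ _, hUU, Matrix.one_mul,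
    ← Matrix.mul_assoc (diagonal _) (diagonal _), diagonal_mul_diagonal]
  congr 3
  funext i
  simp only [Function.comp_apply]
  rw [← RCLike.ofReal_mul, Real.mul_self_sqrt (hA.eigenvalues_nonneg i)]

end Matrix.PosSemidef

namespace Matrix

theorem exists_mulVec_eq_smul_iff_det_smul_one_sub_eq_zero {n R : Type*} [Fintype n]
    [DecidableEq n] [CommRing R] [IsDomain R] (C : Matrix n n R) (μ : R) :
    (∃ v : n → R, v ≠ 0 ∧ C *ᵥ v = μ • v) ↔ (μ • (1 : Matrix n n R) - C).det = 0 := by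
  rw [← exists_mulVec_eq_zero_iff]
  refine exists_congr fun v => and_congr_right fun _ => ?_
  rw [sub_mulVec, smul_mulVec, one_mulVec, sub_eq_zero, eq_comm]

-- The block matrix is `P ⊗ 1` with `P = [[a, b], [c, d]]`, inverted by `(det P)⁻¹ • adj P ⊗ 1`.
theorem isUnit_det_fromBlocks_smul_one {n R : Type*} [Fintype n] [DecidableEq n] [CommRing R]
    {a b c d : R} (h : IsUnit (a * d - b * c)) :
    IsUnit (fromBlocks (a • 1) (b • 1) (c • 1) (d • 1) : Matrix (n ⊕ n) (n ⊕ n) R).det := by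
  have hadj : fromBlocks (a • 1) (b • 1) (c • 1) (d • 1) *
      fromBlocks (d • 1) ((-b) • 1) ((-c) • 1) (a • 1) =
      (a * d - b * c) • (1 : Matrix (n ⊕ n) (n ⊕ n) R) := by
    rw [fromBlocks_multiply, ← fromBlocks_one, fromBlocks_smul]
    simp only [smul_mul_smul, Matrix.one_mul, ← add_smul, smul_zero]
    congr 2 <;> ring_nf <;> exact zero_smul R 1
  refine isUnit_det_of_right_inverse (B := ((h.unit⁻¹ : Rˣ) : R) •
    fromBlocks (d • 1) ((-b) • 1) ((-c) • 1) (a • 1)) ?_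
  rw [Matrix.mul_smul, hadj, smul_smul, h.val_inv_mul, one_smul]

theorem fromBlocks_mul_fromBlocks_smul_one_mul_transpose {m n k R : Type*} [Fintype k]
    [DecidableEq k] [CommSemiring R] (X : Matrix m k R) (Y : Matrix n k R) (a b c d : R) :
    fromBlocks X 0 0 Y * (fromBlocks (a • 1) (b • 1) (c • 1) (d • 1) : Matrix (k ⊕ k) (k ⊕ k) R) *
        (fromBlocks X 0 0 Y)ᵀ =
      fromBlocks (a • (X * Xᵀ)) (b • (X * Yᵀ)) (c • (Y * Xᵀ)) (d • (Y * Yᵀ)) := by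
  rw [fromBlocks_transpose, transpose_zero, fromBlocks_multiply, fromBlocks_multiply]
  simp [Matrix.mul_smul, Matrix.smul_mul]

section Field

variable {m n K : Type*} [Fintype m] [Fintype n] [DecidableEq m] [DecidableEq n] [Field K]

theorem det_fromBlocks_zero_inv_eq_zero_iff (B : Matrix m n K) (C : Matrix n m K)
    {D : Matrix n n K} (hD : IsUnit D.det) :
    (fromBlocks 0 B C D⁻¹).det = 0 ↔ (B * D * C).det = 0 := by
  have : Invertible D⁻¹ := invertibleOfIsUnitDet _ (isUnit_nonsing_inv_det D hD)
  rw [det_fromBlocks₂₂, invOf_eq_nonsing_inv, nonsing_inv_nonsing_inv D hD, zero_sub, det_neg,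
    Matrix.mul_assoc, mul_eq_zero, mul_eq_zero]
  simp [hD.ne_zero]

theorem det_fromBlocks_smul_eq_zero_iff {a b c : K} (ha : a ≠ 0) (hbc : b * c = a)
    (A : Matrix m m K) (B : Matrix m n K) (C : Matrix n m K) {G : Matrix n n K}
    (hG : IsUnit G.det) :
    (fromBlocks (a • A) (b • B) (c • C) (a • G)).det = 0 ↔ (a • A - B * G⁻¹ * C).det = 0 := by
  have haG : IsUnit (a • G).det := by
    rw [det_smul]
    exact ((isUnit_iff_ne_zero.2 ha).pow _).mul hG
  have : Invertible (a • G) := invertibleOfIsUnitDet _ haG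
  have : Invertible a := invertibleOfNonzero ha
  have hcomplement : b • B * (a • G)⁻¹ * (c • C) = B * G⁻¹ * C := by
    rw [inv_smul G a hG, invOf_eq_inv]
    simp only [Matrix.smul_mul, Matrix.mul_smul, smul_smul]
    rw [show c * (a⁻¹ * b) = 1 by rw [mul_left_comm, mul_comm c, hbc, inv_mul_cancel₀ ha],
      one_smul]
  rw [det_fromBlocks₂₂, invOf_eq_nonsing_inv, hcomplement, mul_eq_zero]
  simp [ha, hG.ne_zero]

theorem det_smul_mul_self_sub_eq_zero_iff {S : Matrix n n K} (hS : IsUnit S.det)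
    (M : Matrix n n K) (μ : K) :
    (μ • (S * S) - M).det = 0 ↔ (μ • 1 - S⁻¹ * M * S⁻¹).det = 0 := by
  have hfactor : μ • (S * S) - M = S * (μ • 1 - S⁻¹ * M * S⁻¹) * S := by
    simp only [Matrix.mul_sub, Matrix.sub_mul, Matrix.mul_smul, Matrix.smul_mul, Matrix.mul_one,
      ← Matrix.mul_assoc, mul_nonsing_inv S hS, Matrix.one_mul]
    rw [Matrix.mul_assoc _ S⁻¹ S, nonsing_inv_mul S hS, Matrix.mul_one]
  rw [hfactor, det_mul, det_mul, mul_eq_zero, mul_eq_zero]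
  simp [hS.ne_zero]

end Field

end Matrix

theorem stmt0_general (p q n : ℕ)
    (X : Matrix (Fin p) (Fin n) ℝ) (Y : Matrix (Fin q) (Fin n) ℝ)
    (hX : (X * Xᵀ).PosDef) (hY : IsUnit (Y * Yᵀ).det)
    (lam : ℝ) (hlam : 0 < lam) (hlam1 : lam ≠ 1)
    (C : Matrix (Fin p) (Fin p) ℝ)
    (hC : C = (hX.posSemidef.sqrt)⁻¹ * (X * Yᵀ) * (Y * Yᵀ)⁻¹ * (Y * Xᵀ) * (hX.posSemidef.sqrt)⁻¹)
    (W : Matrix (Fin p ⊕ Fin q) (Fin n ⊕ Fin n) ℝ)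
    (hW : W = fromBlocks X 0 0 Y)
    (D : Matrix (Fin n ⊕ Fin n) (Fin n ⊕ Fin n) ℝ)
    (hD : D = fromBlocks (lam • 1) (Real.sqrt lam • 1) (Real.sqrt lam • 1) (lam • 1))
    (H : Matrix ((Fin p ⊕ Fin q) ⊕ (Fin n ⊕ Fin n)) ((Fin p ⊕ Fin q) ⊕ (Fin n ⊕ Fin n)) ℝ)
    (hH : H = fromBlocks 0 W Wᵀ D⁻¹) :
    (∃ v : Fin p → ℝ, v ≠ 0 ∧ C.mulVec v = lam • v) ↔ H.det = 0 := by
  have hsqrt : √lam * √lam = lam := Real.mul_self_sqrt hlam.le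
  have hS := hX.posSemidef.sqrt_mul_self
  have hSdet : IsUnit hX.posSemidef.sqrt.det :=
    isUnit_of_mul_isUnit_left (y := hX.posSemidef.sqrt.det) <| by
      rw [← det_mul, hS]
      exact isUnit_iff_ne_zero.2 hX.det_pos.ne'
  have hDdet : IsUnit D.det := by
    rw [hD]
    refine isUnit_det_fromBlocks_smul_one (isUnit_iff_ne_zero.2 ?_)
    rw [hsqrt, ← mul_sub_one]
    exact mul_ne_zero hlam.ne' (sub_ne_zero.2 hlam1)
  rw [exists_mulVec_eq_smul_iff_det_smul_one_sub_eq_zero, hH,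
    det_fromBlocks_zero_inv_eq_zero_iff _ _ hDdet, hW, hD,
    fromBlocks_mul_fromBlocks_smul_one_mul_transpose,
    det_fromBlocks_smul_eq_zero_iff hlam.ne' hsqrt _ _ _ hY, ← hS,
    det_smul_mul_self_sub_eq_zero_iff hSdet, hC]
  simp only [Matrix.mul_assoc]

theorem stmt0 (p q n : ℕ) (hp : 0 < p) (hq : 0 < q) (hn : 0 < n)
    (X : Matrix (Fin p) (Fin n) ℝ) (Y : Matrix (Fin q) (Fin n) ℝ)
    (hX : (X * Xᵀ).PosDef) (hY : IsUnit (Y * Yᵀ).det)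
    (lam : ℝ) (hlam : 0 < lam) (hlam1 : lam ≠ 1)
    (C : Matrix (Fin p) (Fin p) ℝ)
    (hC : C = (hX.posSemidef.sqrt)⁻¹ * (X * Yᵀ) * (Y * Yᵀ)⁻¹ * (Y * Xᵀ) * (hX.posSemidef.sqrt)⁻¹)
    (W : Matrix (Fin p ⊕ Fin q) (Fin n ⊕ Fin n) ℝ)
    (hW : W = fromBlocks X 0 0 Y)
    (D : Matrix (Fin n ⊕ Fin n) (Fin n ⊕ Fin n) ℝ)
    (hD : D = fromBlocks (lam • 1) (Real.sqrt lam • 1) (Real.sqrt lam • 1) (lam • 1))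
    (H : Matrix ((Fin p ⊕ Fin q) ⊕ (Fin n ⊕ Fin n)) ((Fin p ⊕ Fin q) ⊕ (Fin n ⊕ Fin n)) ℝ)
    (hH : H = fromBlocks 0 W Wᵀ D⁻¹) :
    (∃ v : Fin p → ℝ, v ≠ 0 ∧ C.mulVec v = lam • v) ↔ H.det = 0 :=
  stmt0_general p q n X Y hX hY lam hlam hlam1 C hC W hW D hD H hH
end

section
/- Let c₁, c₂, z ∈ ℂ with z ∉ {0,1}, and suppose m₁, m₂, m₃, m₄ ∈ ℂ∖{0} satisfy: (i) m₁ m₃ = −c₁, (ii) m₂ m₄ = −c₂, (iii) m₃ − m₄ = (1−z)(c₁−c₂), and (iv) m₃² + [(2c₁−1)z − c₁ + c₂] m₃ + c₁(c₁−1)z(z−1) = 0. If moreover z^{-1} − (m₁ + m₂) + (z−1)m₁m₂ ≠ 0, then m₃ = (1 − (z−1)m₂) / (z^{-1} − (m₁ + m₂) + (z−1)m₁m₂). -/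
theorem stmt6 (c₁ c₂ z : ℂ) (hz0 : z ≠ 0) (hz1 : z ≠ 1)
    (m₁ m₂ m₃ m₄ : ℂ) (hm₁0 : m₁ ≠ 0) (hm₂0 : m₂ ≠ 0) (hm₃0 : m₃ ≠ 0) (hm₄0 : m₄ ≠ 0)
    (h1 : m₁ * m₃ = -c₁) (h2 : m₂ * m₄ = -c₂)
    (h3 : m₃ - m₄ = (1 - z) * (c₁ - c₂))
    (h4 : m₃ ^ 2 + ((2 * c₁ - 1) * z - c₁ + c₂) * m₃ + c₁ * (c₁ - 1) * z * (z - 1) = 0)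
    (hden : z⁻¹ - (m₁ + m₂) + (z - 1) * m₁ * m₂ ≠ 0) :
    m₃ = (1 - (z - 1) * m₂) / (z⁻¹ - (m₁ + m₂) + (z - 1) * m₁ * m₂) := by
  -- h4 is divisible by m₃ after substituting c₁ = -m₁m₃
  have hm3Q : m₃ * (m₃ + (-(2*m₁*m₃) - 1)*z + m₁*m₃ + c₂ + m₁*(m₁*m₃+1)*z*(z-1)) = 0 := by
    linear_combination h4 + (m₃ - 2*z*m₃ + z*(z-1)*((m₁*m₃+c₁)+1-2*c₁)) * h1
  have hQ : m₃ + (-(2*m₁*m₃) - 1)*z + m₁*m₃ + c₂ + m₁*(m₁*m₃+1)*z*(z-1) = 0 :=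
    (mul_eq_zero.mp hm3Q).resolve_left hm₃0
  -- the h2/h3 relation
  have hstar : c₂*(1+(1-z)*m₂) + m₂*m₃*(1+(1-z)*m₁) = 0 := by
    linear_combination ((1-z)*m₂)*h1 + h2 + m₂*h3
  -- combine
  have hR : (1+(1-z)*m₁) *
      (m₃*(1 - z*(m₁+m₂) + z*(z-1)*m₁*m₂) - z*(1+(1-z)*m₂)) = 0 := by
    linear_combination (-1 : ℂ) * hstar + (1+(1-z)*m₂) * hQ
  rcases mul_eq_zero.mp hR with h5 | hK
  · -- degenerate case: contradiction
    exfalso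
    have hc2 : (z-1)*c₂ = 0 := by
      linear_combination (z-1)*hQ + (m₃*z*(m₁*(z-1)) - (m₃*z - m₃ - z^2 + z))*h5
    have hz1' : z - 1 ≠ 0 := sub_ne_zero.mpr hz1
    have hc2' : c₂ = 0 := by
      rcases mul_eq_zero.mp hc2 with h | h
      · exact absurd h hz1'
      · exact h
    exact mul_ne_zero hm₂0 hm₄0 (by rw [h2, hc2', neg_zero])
  · rw [eq_div_iff hden]
    field_simp
    linear_combination hK
end

section
/- Let z ∈ ℂ with z ∉ {0,1}, fix w ∈ ℂ with w² = z, and suppose m₁, m₂, m₃, m₄ ∈ ℂ satisfy m₃ = (1 − (z−1)m₂)/(z^{-1} − (m₁+m₂) + (z−1)m₁m₂) (with nonzero denominator), m₄ = (1 − (z−1)m₁)/(z^{-1} − (m₁+m₂) + (z−1)m₁m₂), and set h := w^{-1} m₃/(1 + (1−z)m₂). Then the 2×2 matrix π := [[m₃, h],[h, m₄]] is invertible with inverse π^{-1} = (1/(z−1)) [[1 − (z−1)m₁, −w^{-1}],[−w^{-1}, 1 − (z−1)m₂]]. -/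
/-!
Write `D := z⁻¹ - (m₁ + m₂) + (z - 1) m₁ m₂` and `aᵢ := 1 - (z - 1) mᵢ`. Since `a₂ = 1 + (1 - z) m₂`,
the off-diagonal entry simplifies to `h = w⁻¹ / D`, so `π = D⁻¹ • !![a₂, w⁻¹; w⁻¹, a₁]`. Using
`w⁻² = z⁻¹`, the determinant of the latter matrix is `a₁ a₂ - z⁻¹ = (z - 1) D`, and the adjugate
formula for `2 × 2` inverses gives the claim.
-/

theorem Matrix.inv_smul_fin_two_of {K : Type*} [Field K] (s a b c d : K) :
    (s • !![a, b; c, d])⁻¹ = (s * (a * d - b * c))⁻¹ • !![d, -b; -c, a] := by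
  rw [Matrix.inv_def, Matrix.det_smul, Matrix.adjugate_smul, Matrix.det_fin_two_of,
    Matrix.adjugate_fin_two_of, Ring.inverse_eq_inv', smul_smul]
  congr 1
  rcases eq_or_ne s 0 with rfl | hs
  · simp
  · norm_num [Fintype.card_fin]
    field_simp

theorem det_eq_sub_one_mul_den {z w : ℂ} (hz0 : z ≠ 0) (hw : w ^ 2 = z) (m₁ m₂ : ℂ) :
    !![1 - (z - 1) * m₂, w⁻¹; w⁻¹, 1 - (z - 1) * m₁].det
      = (z - 1) * (z⁻¹ - (m₁ + m₂) + (z - 1) * m₁ * m₂) := by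
  rw [Matrix.det_fin_two_of, ← mul_inv, ← pow_two, hw]
  field_simp
  ring

theorem stmt7 (z w : ℂ) (hz0 : z ≠ 0) (hz1 : z ≠ 1) (hw : w ^ 2 = z)
    (m₁ m₂ m₃ m₄ : ℂ)
    (hden : z⁻¹ - (m₁ + m₂) + (z - 1) * m₁ * m₂ ≠ 0)
    (hm₃ : m₃ = (1 - (z - 1) * m₂) / (z⁻¹ - (m₁ + m₂) + (z - 1) * m₁ * m₂))
    (hm₄ : m₄ = (1 - (z - 1) * m₁) / (z⁻¹ - (m₁ + m₂) + (z - 1) * m₁ * m₂))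
    (hden2 : 1 + (1 - z) * m₂ ≠ 0)
    (h : ℂ) (hh : h = w⁻¹ * m₃ / (1 + (1 - z) * m₂))
    (π : Matrix (Fin 2) (Fin 2) ℂ) (hπ : π = !![m₃, h; h, m₄]) :
    IsUnit π.det ∧
      π⁻¹ = (z - 1)⁻¹ • !![1 - (z - 1) * m₁, -w⁻¹; -w⁻¹, 1 - (z - 1) * m₂] := by
  set D := z⁻¹ - (m₁ + m₂) + (z - 1) * m₁ * m₂
  have hz1' : z - 1 ≠ 0 := sub_ne_zero.mpr hz1
  have hh' : h = w⁻¹ / D := by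
    rw [hh, hm₃, show (1 : ℂ) - (z - 1) * m₂ = 1 + (1 - z) * m₂ by ring]
    field_simp
  have hπ' : π = D⁻¹ • !![1 - (z - 1) * m₂, w⁻¹; w⁻¹, 1 - (z - 1) * m₁] := by
    simp [hπ, hm₃, hm₄, hh', div_eq_inv_mul]
  have hdet : !![1 - (z - 1) * m₂, w⁻¹; w⁻¹, 1 - (z - 1) * m₁].det = (z - 1) * D :=
    det_eq_sub_one_mul_den hz0 hw m₁ m₂
  refine ⟨?_, ?_⟩
  · rw [hπ', Matrix.det_smul, hdet]
    exact (mul_ne_zero (pow_ne_zero _ (inv_ne_zero hden)) (mul_ne_zero hz1' hden)).isUnit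
  · rw [hπ', Matrix.inv_smul_fin_two_of, ← Matrix.det_fin_two_of, hdet,
      mul_left_comm, inv_mul_cancel₀ hden, mul_one]
end

section
/- Let c₁, c₂ ∈ (0,1), λ± := (√(c₁(1−c₂)) ± √(c₂(1−c₁)))², and z, s, w ∈ ℂ with z ∉ {0,1}, w² = z, and s² = (z−λ₋)(z−λ₊). With m₂ := (−z + c₁ + c₂ + s)/(2(1−c₂)z(1−z)) − c₂/((1−c₂)z) and m₃ := ((1−2c₁)z + c₁ − c₂ + s)/2, assume 1 + (1−z)m₂ ≠ 0. Then w^{-1} m₃ / (1 + (1−z)m₂) = (w/2)·(−z + (2−c₁−c₂) + s). -/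
/-!
Clearing the denominators of `m₂` gives `1 + (1 - z) m₂ = (z + c₁ - c₂ + s) / (2 (1 - c₂) z)`, and
`w⁻¹ = w / z`. The claim then reduces to the factorisation
`2 (1 - c₂) ((1 - 2c₁) z + c₁ - c₂ + s) = (-z + 2 - c₁ - c₂ + s) (z + c₁ - c₂ + s)`,
which holds because, by Vieta, `s² = z² - 2 (c₁ + c₂ - 2 c₁ c₂) z + (c₁ - c₂)²`.
-/

lemma sub_mul_sub_sqrt_sub_add_sq {a b : ℝ} (ha : 0 ≤ a) (hb : 0 ≤ b) (z : ℂ) :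
    (z - ((√a - √b) ^ 2 : ℝ)) * (z - ((√a + √b) ^ 2 : ℝ)) =
      z ^ 2 - 2 * ((a : ℂ) + b) * z + ((a : ℂ) - b) ^ 2 := by
  have hsa : ((√a : ℝ) : ℂ) ^ 2 = a := by exact_mod_cast Real.sq_sqrt ha
  have hsb : ((√b : ℝ) : ℂ) ^ 2 = b := by exact_mod_cast Real.sq_sqrt hb
  push_cast
  rw [← hsa, ← hsb]
  ring

lemma two_mul_one_sub_mul_eq_of_sq_eq {R : Type*} [CommRing R] {c₁ c₂ z s : R}
    (hs : s ^ 2 = z ^ 2 - 2 * (c₁ + c₂ - 2 * c₁ * c₂) * z + (c₁ - c₂) ^ 2) :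
    2 * (1 - c₂) * ((1 - 2 * c₁) * z + c₁ - c₂ + s) =
      (-z + (2 - c₁ - c₂) + s) * (z + c₁ - c₂ + s) := by
  linear_combination -hs

section Field

variable {K : Type*} [Field K] [CharZero K]

lemma one_add_one_sub_mul_m₂_eq {c₁ c₂ z s : K} (hc₂ : 1 - c₂ ≠ 0) (hz0 : z ≠ 0) (hz1 : 1 - z ≠ 0) :
    1 + (1 - z) * ((-z + c₁ + c₂ + s) / (2 * (1 - c₂) * z * (1 - z)) - c₂ / ((1 - c₂) * z)) =
      (z + c₁ - c₂ + s) / (2 * (1 - c₂) * z) := by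
  field_simp
  ring

lemma inv_mul_m₃_div_eq_of_sq_eq {c₁ c₂ z s w : K} (hw : w ^ 2 = z) (hz0 : z ≠ 0)
    (hD : z + c₁ - c₂ + s ≠ 0)
    (hs : s ^ 2 = z ^ 2 - 2 * (c₁ + c₂ - 2 * c₁ * c₂) * z + (c₁ - c₂) ^ 2) :
    w⁻¹ * (((1 - 2 * c₁) * z + c₁ - c₂ + s) / 2) / ((z + c₁ - c₂ + s) / (2 * (1 - c₂) * z)) =
      (w / 2) * (-z + (2 - c₁ - c₂) + s) := by
  have hw0 : w ≠ 0 := by rintro rfl; simp [← hw] at hz0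
  subst hw
  field_simp
  linear_combination two_mul_one_sub_mul_eq_of_sq_eq hs

end Field

theorem stmt8 (c₁ c₂ : ℝ) (hc₁ : c₁ ∈ Set.Ioo (0:ℝ) 1) (hc₂ : c₂ ∈ Set.Ioo (0:ℝ) 1)
    (lp lm : ℝ)
    (hlp : lp = (Real.sqrt (c₁ * (1 - c₂)) + Real.sqrt (c₂ * (1 - c₁))) ^ 2)
    (hlm : lm = (Real.sqrt (c₁ * (1 - c₂)) - Real.sqrt (c₂ * (1 - c₁))) ^ 2)
    (z s w : ℂ) (hz0 : z ≠ 0) (hz1 : z ≠ 1) (hw : w ^ 2 = z)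
    (hs : s ^ 2 = (z - (lm : ℂ)) * (z - (lp : ℂ)))
    (m₂ m₃ : ℂ)
    (hm₂ : m₂ = (-z + c₁ + c₂ + s) / (2 * (1 - (c₂ : ℂ)) * z * (1 - z)) - c₂ / ((1 - (c₂ : ℂ)) * z))
    (hm₃ : m₃ = ((1 - 2 * (c₁ : ℂ)) * z + c₁ - c₂ + s) / 2)
    (hden : 1 + (1 - z) * m₂ ≠ 0) :
    w⁻¹ * m₃ / (1 + (1 - z) * m₂) = (w / 2) * (-z + (2 - c₁ - c₂) + s) := by
  obtain ⟨hc₁0, hc₁1⟩ := hc₁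
  obtain ⟨hc₂0, hc₂1⟩ := hc₂
  have hs' : s ^ 2 = z ^ 2 - 2 * (c₁ + c₂ - 2 * c₁ * c₂) * z + (c₁ - c₂) ^ 2 := by
    rw [hs, hlm, hlp, sub_mul_sub_sqrt_sub_add_sq (by nlinarith) (by nlinarith)]
    push_cast
    ring
  have hc₂1' : 1 - (c₂ : ℂ) ≠ 0 := by exact_mod_cast (sub_pos.mpr hc₂1).ne'
  have hE := one_add_one_sub_mul_m₂_eq (c₁ := (c₁ : ℂ)) (s := s) hc₂1' hz0 (sub_ne_zero.mpr hz1.symm)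
  rw [← hm₂] at hE
  rw [hE] at hden
  rw [hE, hm₃]
  exact inv_mul_m₃_div_eq_of_sq_eq hw hz0 (div_ne_zero_iff.mp hden).1 hs'
end

section
/- Let H be an invertible complex N×N matrix, i ∈ {1,…,N}, and suppose the minor H^{(i)} is invertible, with G := H^{-1} and G^{(i)} := (H^{(i)})^{-1}. Then for every j ≠ i, G_{ij} = −G_{ii} · Σ_{k≠i} H_{ik} G^{(i)}_{kj}. -/
open Matrix

theorem stmt15 (N : ℕ) (H : Matrix (Fin N) (Fin N) ℂ) (i : Fin N)
    (hH : IsUnit H.det)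
    (hHi : IsUnit ((H.submatrix (Subtype.val : {j : Fin N // j ≠ i} → Fin N)
        (Subtype.val : {j : Fin N // j ≠ i} → Fin N)).det)) :
    ∀ j : Fin N, ∀ hj : j ≠ i,
      H⁻¹ i j = -(H⁻¹ i i) * ∑ k : {l : Fin N // l ≠ i},
        H i (k : Fin N) *
          (H.submatrix (Subtype.val : {l : Fin N // l ≠ i} → Fin N)
            (Subtype.val : {l : Fin N // l ≠ i} → Fin N))⁻¹ k ⟨j, hj⟩ := by
  intro j hj
  set G := H⁻¹ with hG
  set M := H.submatrix (Subtype.val : {l : Fin N // l ≠ i} → Fin N)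
      (Subtype.val : {l : Fin N // l ≠ i} → Fin N) with hM
  have hGH : G * H = 1 := nonsing_inv_mul H hH
  set v : {l : Fin N // l ≠ i} → ℂ := fun k => G i k with hv
  set w : {l : Fin N // l ≠ i} → ℂ := fun l => -(G i i * H i l) with hw
  have key : v ᵥ* M = w := by
    funext l
    have h1 : ∑ k, G i k * H k l = 0 := by
      have h2 := congrFun (congrFun hGH i) (l : Fin N)
      rw [Matrix.mul_apply] at h2
      rw [h2, Matrix.one_apply_ne]
      exact fun h => l.2 (h ▸ rfl)
    have hsplit : G i i * H i l
        + ∑ k ∈ Finset.univ.erase i, G i k * H k l = ∑ k, G i k * H k l :=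
      Finset.add_sum_erase _ (fun k : Fin N => G i k * H k l) (Finset.mem_univ i)
    have hsub : ∑ k ∈ Finset.univ.erase i, G i k * H k l
        = ∑ k : {l : Fin N // l ≠ i}, G i k * H k l :=
      Finset.sum_subtype _ (fun x => by simp) _
    have : G i i * H i l + ∑ k : {l : Fin N // l ≠ i}, G i k * H k l = 0 := by
      rw [← hsub]; rw [h1] at hsplit; exact hsplit
    simp only [Matrix.vecMul, dotProduct, hw]
    have := eq_neg_of_add_eq_zero_right this
    simpa [hM, hv, Matrix.submatrix_apply] using this.symm ▸ rfl
  have hMinv : M * M⁻¹ = 1 := mul_nonsing_inv M hHi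
  have hvw : v = w ᵥ* M⁻¹ := by
    calc v = v ᵥ* 1 := (Matrix.vecMul_one v).symm
    _ = v ᵥ* (M * M⁻¹) := by rw [hMinv]
    _ = (v ᵥ* M) ᵥ* M⁻¹ := by rw [Matrix.vecMul_vecMul]
    _ = w ᵥ* M⁻¹ := by rw [key]
  have := congrFun hvw ⟨j, hj⟩
  simp only [hv] at this
  rw [this]
  simp only [Matrix.vecMul, dotProduct, hw]
  rw [Finset.mul_sum]
  congr 1; funext k; ring
end
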